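/- arXiv:2410.02322 — 5 statements merged into one kernel-verified Lean document; each statement's English description precedes it below -/
import Mathlib

section
/- Let A be an abelian category, X a class of objects in A, and Y an object. A short exact sequence 0 → X → E → Y → 0 with X ∈ add X is a universal extension from Y to X (i.e. the connecting map Hom(X, X') → Ext¹(Y, X') is surjective for every X' ∈ X) if and only if for every short exact sequence 0 → X' → E' → Y → 0 with X' ∈ X there exist morphisms X → X' and E → E' making the left square a pushout square and the right square commute over the identity of Y. -/
open CategoryTheory Limits ZeroObject

attribute [local instance] CategoryTheory.Limits.HasFiniteBiproducts.of_hasFiniteProducts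

universe w v u

variable {A : Type u} [Category.{v} A] [Abelian A]

/-- `i : X ⟶ E` and `p : E ⟶ Y` form a short exact sequence `0 → X → E → Y → 0`. -/
def IsShortExactSeq {X E Y : A} (i : X ⟶ E) (p : E ⟶ Y) : Prop :=
  ∃ w : i ≫ p = 0, (ShortComplex.mk i p w).ShortExact

/-- A torsion pair `(𝒯, ℱ)` in an abelian category. -/
structure TorsionPair (A : Type u) [Category.{v} A] [Abelian A] where
  tors : Set A
  free : Set A
  hom_vanish : ∀ {T F : A}, T ∈ tors → F ∈ free → ∀ f : T ⟶ F, f = 0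
  exists_seq : ∀ X : A, ∃ (tX fX : A) (i : tX ⟶ X) (p : X ⟶ fX),
      tX ∈ tors ∧ fX ∈ free ∧ IsShortExactSeq i p

/-- `M` lies in `add 𝒳`: it is a direct summand of a finite direct sum of objects of `𝒳`. -/
def InAdd (𝒳 : Set A) (M : A) : Prop :=
  ∃ (n : ℕ) (g : Fin n → A) (s : M ⟶ ⨁ g) (r : (⨁ g) ⟶ M),
    (∀ j, g j ∈ 𝒳) ∧ s ≫ r = 𝟙 M

/-- `Ext¹(Z, W) = 0`, expressed by the splitting of all short exact sequences
`0 → W → U → Z → 0`. -/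
def Ext1Vanishes (Z W : A) : Prop :=
  ∀ ⦃U : A⦄ (i : W ⟶ U) (p : U ⟶ Z), IsShortExactSeq i p → ∃ r : U ⟶ W, i ≫ r = 𝟙 W

/-- A short exact sequence `0 → X → E → Y → 0` with `X ∈ add 𝒳` is a universal extension
from `Y` to `𝒳` if every short exact sequence `0 → X' → U → Y → 0` with `X' ∈ 𝒳` is a
pushout of it, i.e. the connecting map `Hom(X, X') → Ext¹(Y, X')` is surjective. -/
def IsUniversalExtension (𝒳 : Set A) {X E Y : A} (i : X ⟶ E) (p : E ⟶ Y) : Prop :=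
  InAdd 𝒳 X ∧ IsShortExactSeq i p ∧
  ∀ ⦃X' U : A⦄ (i' : X' ⟶ U) (p' : U ⟶ Y), X' ∈ 𝒳 → IsShortExactSeq i' p' →
    ∃ (φ : X ⟶ X') (ψ : E ⟶ U), i ≫ ψ = φ ≫ i' ∧ ψ ≫ p' = p

/-- `Y` admits a universal extension to `𝒳`. -/
def AdmitsUniversalExtension (𝒳 : Set A) (Y : A) : Prop :=
  ∃ (X E : A) (i : X ⟶ E) (p : E ⟶ Y), IsUniversalExtension 𝒳 i p

/-- A morphism is right minimal if precomposing with an endomorphism which fixes it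
forces the endomorphism to be an automorphism. -/
def RightMinimal {E Y : A} (p : E ⟶ Y) : Prop :=
  ∀ g : E ⟶ E, g ≫ p = p → IsIso g

/-- A Krull–Schmidt category: every object is a finite direct sum of objects
with local endomorphism rings. -/
def KrullSchmidt (A : Type u) [Category.{v} A] [Abelian A] : Prop :=
  ∀ X : A, ∃ (n : ℕ) (g : Fin n → A),
    (∀ j, IsLocalRing (End (g j))) ∧ Nonempty (X ≅ ⨁ g)

/-- `f : M ⟶ X` is a left `𝒳`-approximation of `M`. -/
def IsLeftApprox (𝒳 : Set A) {M X : A} (f : M ⟶ X) : Prop :=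
  X ∈ 𝒳 ∧ ∀ ⦃X' : A⦄, X' ∈ 𝒳 → ∀ g : M ⟶ X', ∃ h : X ⟶ X', f ≫ h = g

/-- `f : X ⟶ M` is a right `𝒳`-approximation of `M`. -/
def IsRightApprox (𝒳 : Set A) {X M : A} (f : X ⟶ M) : Prop :=
  X ∈ 𝒳 ∧ ∀ ⦃X' : A⦄, X' ∈ 𝒳 → ∀ g : X' ⟶ M, ∃ h : X' ⟶ X, h ≫ f = g

/-- `𝒳` is covariantly finite: every object admits a left `𝒳`-approximation. -/
def CovariantlyFinite (𝒳 : Set A) : Prop :=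
  ∀ M : A, ∃ (X : A) (f : M ⟶ X), IsLeftApprox 𝒳 f

/-- `𝒳` is contravariantly finite: every object admits a right `𝒳`-approximation. -/
def ContravariantlyFinite (𝒳 : Set A) : Prop :=
  ∀ M : A, ∃ (X : A) (f : X ⟶ M), IsRightApprox 𝒳 f

/-- `𝒳` is functorially finite. -/
def FunctoriallyFinite (𝒳 : Set A) : Prop :=
  CovariantlyFinite 𝒳 ∧ ContravariantlyFinite 𝒳

/-- The left Ext-orthogonal `^{⊥_E}𝒯` of the torsion class of a torsion pair. -/
def perpE (P : TorsionPair A) : Set A :=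
  {X | ∀ T ∈ P.tors, Ext1Vanishes X T}

/-!
A morphism of short exact sequences `(φ, ψ, 𝟙 Y)` from `0 → X → E → Y → 0` to
`0 → X' → U → Y → 0` always has a pushout left-hand square: `E ⊞ X' → U` is onto (lift through
`p` and correct by an element of `X'`), and its kernel is the image of `X → E ⊞ X'` (the
`E`-component of a kernel element dies in `Y`, so it comes from `X`). Hence the two conditions
differ only by the pushout property, which is automatic.
-/

namespace CategoryTheory.ShortComplex

variable {S S' : ShortComplex A} (f : S ⟶ S')

lemma exact_commSq_shortComplex_of_mono_τ₃ (hS : S.Exact) [Mono S.f] [Mono S'.f] [Mono f.τ₃] :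
    (CommSq.mk f.comm₁₂.symm).shortComplex.Exact := by
  rw [exact_iff_exact_up_to_refinements]
  intro T (x : T ⟶ S.X₂ ⊞ S'.X₁) (hx : x ≫ biprod.desc f.τ₂ S'.f = 0)
  have hsum : (x ≫ biprod.fst) ≫ f.τ₂ = -((x ≫ biprod.snd) ≫ S'.f) := by
    rw [eq_neg_iff_add_eq_zero, ← hx, biprod.desc_eq]; simp
  have hx₁ : (x ≫ biprod.fst) ≫ S.g = 0 := by
    rw [← cancel_mono f.τ₃, Category.assoc, ← f.comm₂₃, ← Category.assoc, hsum]; simp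
  refine ⟨T, 𝟙 T, inferInstance, hS.lift _ hx₁, ?_⟩
  have hlift_τ₁ : hS.lift _ hx₁ ≫ f.τ₁ = -(x ≫ biprod.snd) := by
    rw [← cancel_mono S'.f, Category.assoc, f.comm₁₂, hS.lift_f_assoc, hsum, Preadditive.neg_comp]
  change 𝟙 T ≫ x = _ ≫ biprod.lift S.f (-f.τ₁)
  ext <;> simp [hlift_τ₁]

lemma epi_biprod_desc_of_epi_τ₃ (hS' : S'.Exact) [Mono S'.f] [Epi S.g] [Epi f.τ₃] :
    Epi (biprod.desc f.τ₂ S'.f) := by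
  rw [epi_iff_surjective_up_to_refinements]
  intro T z
  obtain ⟨T', π, _, e, he⟩ := surjective_up_to_refinements_of_epi (S.g ≫ f.τ₃) (z ≫ S'.g)
  have hx : (π ≫ z - e ≫ f.τ₂) ≫ S'.g = 0 := by
    rw [Preadditive.sub_comp, Category.assoc, he, Category.assoc, f.comm₂₃, sub_self]
  refine ⟨T', π, inferInstance, biprod.lift e (hS'.lift _ hx), ?_⟩
  simp

lemma isPushout_of_isIso_τ₃ (hS : S.ShortExact) (hS' : S'.Exact) [Mono S'.f] [IsIso f.τ₃] :
    IsPushout S.f f.τ₁ f.τ₂ S'.f := by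
  have := hS.mono_f
  have := hS.epi_g
  have sq : CommSq S.f f.τ₁ f.τ₂ S'.f := ⟨f.comm₁₂.symm⟩
  have : Epi sq.shortComplex.g := epi_biprod_desc_of_epi_τ₃ f hS'
  exact ⟨sq, ⟨sq.isColimitEquivIsColimitCokernelCofork.symm
    (exact_commSq_shortComplex_of_mono_τ₃ f hS.exact).gIsCokernel⟩⟩

end CategoryTheory.ShortComplex

theorem stmt2_general {𝒳 : Set A} {X E Y : A}
    (i : X ⟶ E) (p : E ⟶ Y) (hse : IsShortExactSeq i p) :
    (∀ ⦃X' U : A⦄ (i' : X' ⟶ U) (p' : U ⟶ Y), X' ∈ 𝒳 → IsShortExactSeq i' p' →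
        ∃ (φ : X ⟶ X') (ψ : E ⟶ U), i ≫ ψ = φ ≫ i' ∧ ψ ≫ p' = p) ↔
    (∀ ⦃X' U : A⦄ (i' : X' ⟶ U) (p' : U ⟶ Y), X' ∈ 𝒳 → IsShortExactSeq i' p' →
        ∃ (φ : X ⟶ X') (ψ : E ⟶ U), IsPushout i φ ψ i' ∧ ψ ≫ p' = p) := by
  refine ⟨fun h X' U i' p' hX' hse' => ?_, fun h X' U i' p' hX' hse' => ?_⟩
  · obtain ⟨φ, ψ, hw, hp⟩ := h i' p' hX' hse'
    obtain ⟨w, hS⟩ := hse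
    obtain ⟨w', hS'⟩ := hse'
    have := hS'.mono_f
    let f : ShortComplex.mk i p w ⟶ ShortComplex.mk i' p' w' :=
      { τ₁ := φ, τ₂ := ψ, τ₃ := 𝟙 Y, comm₁₂ := hw.symm, comm₂₃ := by simp [hp] }
    exact ⟨φ, ψ, ShortComplex.isPushout_of_isIso_τ₃ f hS hS'.exact, hp⟩
  · obtain ⟨φ, ψ, hpo, hp⟩ := h i' p' hX' hse'
    exact ⟨φ, ψ, hpo.w, hp⟩

/-- A short exact sequence `0 → X → E → Y → 0` with `X ∈ add 𝒳` is a universal extension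
from `Y` to `𝒳` (surjectivity of `Hom(X, X') → Ext¹(Y, X')` for `X' ∈ 𝒳`, expressed as:
every extension of `Y` by an object of `𝒳` receives a morphism of short exact sequences
over the identity of `Y`) if and only if for every short exact sequence
`0 → X' → E' → Y → 0` with `X' ∈ 𝒳` there are morphisms `X ⟶ X'` and `E ⟶ E'` making
the left-hand square a pushout square and the right-hand square commute over `𝟙 Y`. -/
theorem stmt2 {𝒳 : Set A} {X E Y : A}
    (i : X ⟶ E) (p : E ⟶ Y) (hX : InAdd 𝒳 X) (hse : IsShortExactSeq i p) :
    (∀ ⦃X' U : A⦄ (i' : X' ⟶ U) (p' : U ⟶ Y), X' ∈ 𝒳 → IsShortExactSeq i' p' →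
        ∃ (φ : X ⟶ X') (ψ : E ⟶ U), i ≫ ψ = φ ≫ i' ∧ ψ ≫ p' = p) ↔
    (∀ ⦃X' U : A⦄ (i' : X' ⟶ U) (p' : U ⟶ Y), X' ∈ 𝒳 → IsShortExactSeq i' p' →
        ∃ (φ : X ⟶ X') (ψ : E ⟶ U), IsPushout i φ ψ i' ∧ ψ ≫ p' = p) :=
  stmt2_general i p hse
end

section
/- Let A be an abelian category with enough projectives and X a covariantly finite subcategory of A (every object admits a left X-approximation). Then every object A of A admits a universal extension to X, i.e. a short exact sequence 0 → X → E → A → 0 with X ∈ X such that Hom(X, X') → Ext¹(A, X') is surjective for all X' ∈ X. -/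
/-!
Choose an epimorphism `π : P ⟶ Y` from a projective, with kernel `K`, and a left
`𝒳`-approximation `f : K ⟶ X`. The pushout of `0 → K → P → Y → 0` along `f` is the universal
extension: given `0 → X' → U → Y → 0` with `X' ∈ 𝒳`, projectivity lifts `π` to `P ⟶ U`, which
restricts to a map `K ⟶ X'`; this factors through `f`, and the pushout property yields the
comparison map.
-/

open CategoryTheory Limits ZeroObject

attribute [local instance] CategoryTheory.Limits.HasFiniteBiproducts.of_hasFiniteProducts

universe w v u

variable {A : Type u} [Category.{v} A] [Abelian A]

variable {K P Y X : A} {i : K ⟶ P} {p : P ⟶ Y}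

theorem isShortExactSeq_kernel_ι (p : P ⟶ Y) [Epi p] : IsShortExactSeq (kernel.ι p) p :=
  ⟨kernel.condition p,
    { exact := ShortComplex.exact_of_f_is_kernel _ (kernelIsKernel p)
      mono_f := inferInstanceAs (Mono (kernel.ι p))
      epi_g := inferInstanceAs (Epi p) }⟩

theorem IsShortExactSeq.pushout (hS : IsShortExactSeq i p) (f : K ⟶ X) :
    IsShortExactSeq (pushout.inr i f) (pushout.desc p 0 (by rw [hS.1, comp_zero])) := by
  obtain ⟨w, hS⟩ := hS
  set q := pushout.desc p 0 (by rw [w, comp_zero] : i ≫ p = f ≫ 0)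
  have hinl : pushout.inl i f ≫ q = p := pushout.inl_desc _ _ _
  have hinr : pushout.inr i f ≫ q = 0 := pushout.inr_desc _ _ _
  have : Mono i := hS.mono_f
  have : Epi p := hS.epi_g
  have : Epi q := epi_of_epi_fac hinl
  have hcoker : IsColimit (CokernelCofork.ofπ q hinr) := by
    refine CokernelCofork.IsColimit.ofπ' _ hinr fun {T} t ht => ?_
    have hit : i ≫ pushout.inl i f ≫ t = 0 := by
      rw [← Category.assoc, pushout.condition, Category.assoc, ht, comp_zero]
    obtain ⟨d, hd⟩ := CokernelCofork.IsColimit.desc' hS.gIsCokernel _ hit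
    refine ⟨d, pushout.hom_ext ?_ ?_⟩
    · rw [← Category.assoc, hinl]
      exact hd
    · rw [← Category.assoc, hinr, zero_comp, ht]
  exact ⟨hinr,
    { exact := ShortComplex.exact_of_g_is_cokernel _ hcoker
      mono_f := Abelian.mono_pushout_of_mono_f i f
      epi_g := inferInstance }⟩

theorem exists_map_to_isShortExactSeq_of_projective [Projective P] (w : i ≫ p = 0)
    {X' U : A} {i' : X' ⟶ U} {p' : U ⟶ Y} (hS' : IsShortExactSeq i' p') :
    ∃ (g : K ⟶ X') (α : P ⟶ U), i ≫ α = g ≫ i' ∧ α ≫ p' = p := by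
  obtain ⟨_, hS'⟩ := hS'
  have : Epi p' := hS'.epi_g
  have : Mono i' := hS'.mono_f
  have hα : Projective.factorThru p p' ≫ p' = p := Projective.factorThru_comp p p'
  have hiα : (i ≫ Projective.factorThru p p') ≫ p' = 0 := by rw [Category.assoc, hα, w]
  exact ⟨hS'.exact.lift _ hiα, _, (hS'.exact.lift_f _ hiα).symm, hα⟩

theorem exists_map_from_pushout_of_isLeftApprox [Projective P] (w : i ≫ p = 0) {𝒳 : Set A}
    {f : K ⟶ X} (hf : IsLeftApprox 𝒳 f) {X' U : A} {i' : X' ⟶ U} {p' : U ⟶ Y}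
    (hX' : X' ∈ 𝒳) (hS' : IsShortExactSeq i' p') :
    ∃ (φ : X ⟶ X') (ψ : pushout i f ⟶ U),
      pushout.inr i f ≫ ψ = φ ≫ i' ∧ ψ ≫ p' = pushout.desc p 0 (by rw [w, comp_zero]) := by
  obtain ⟨g, α, hg, hα⟩ := exists_map_to_isShortExactSeq_of_projective w hS'
  obtain ⟨φ, rfl⟩ := hf.2 hX' g
  have hcomm : i ≫ α = f ≫ φ ≫ i' := by rw [hg, Category.assoc]
  refine ⟨φ, pushout.desc α (φ ≫ i') hcomm, pushout.inr_desc _ _ _, pushout.hom_ext ?_ ?_⟩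
  · rw [pushout.inl_desc_assoc, hα, pushout.inl_desc]
  · rw [pushout.inr_desc_assoc, Category.assoc, hS'.1, comp_zero, pushout.inr_desc]

/-- If `A` has enough projectives and `𝒳` is covariantly finite, then every object
admits a universal extension to `𝒳`. -/
theorem stmt3 [EnoughProjectives A] {𝒳 : Set A} (h𝒳 : CovariantlyFinite 𝒳) (Y : A) :
    ∃ (X E : A) (i : X ⟶ E) (p : E ⟶ Y), X ∈ 𝒳 ∧ IsShortExactSeq i p ∧
      ∀ ⦃X' U : A⦄ (i' : X' ⟶ U) (p' : U ⟶ Y), X' ∈ 𝒳 → IsShortExactSeq i' p' →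
        ∃ (φ : X ⟶ X') (ψ : E ⟶ U), i ≫ ψ = φ ≫ i' ∧ ψ ≫ p' = p := by
  have hS := isShortExactSeq_kernel_ι (Projective.π Y)
  obtain ⟨X, f, hf⟩ := h𝒳 (kernel (Projective.π Y))
  exact ⟨X, _, _, _, hf.1, hS.pushout f, fun _ _ _ _ hX' hS' =>
    exists_map_from_pushout_of_isLeftApprox hS.1 hf hX' hS'⟩
end

section
/- Let A be an abelian Krull–Schmidt category and X a class of objects. A universal extension 0 → X → E → Y → 0 from Y to X (with X additively closed) is minimal (i.e. E → Y is right minimal) if and only if E has no nonzero direct summand belonging to X that is contained in the kernel, equivalently the sequence has no direct summand of the form 0 → X' → X' → 0 → 0 with X' ∈ X. -/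
open CategoryTheory Limits ZeroObject

attribute [local instance] CategoryTheory.Limits.HasFiniteBiproducts.of_hasFiniteProducts

universe w v u

variable {A : Type u} [Category.{v} A] [Abelian A]

/-! Call `h : E ⟶ E` radical if no object `L` with local endomorphism ring splits off `E` through
`h`, i.e. `a ≫ h ≫ b` is never invertible for `a : L ⟶ E`, `b : E ⟶ L`. When `E` is a finite
direct sum of such objects, `𝟙 - h` is invertible for every radical `h`: the corner `𝟙 - h₁₁` on
the first summand is invertible because `End L` is local, and Gaussian elimination leaves the
Schur complement `𝟙 - (h₂₂ + h₂₁ (𝟙 - h₁₁)⁻¹ h₁₂)`, again of this form on the remaining summands.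

If `g ≫ p = p` with `g` not invertible, then `h = 𝟙 - g` is not radical, so a local object `L`
splits off `E` through `h`; as `h ≫ p = 0`, this summand lies in the kernel `X ∈ add 𝒳` of `p`,
hence in `𝒳`. Conversely, a summand `s : X' ⟶ E`, `r : E ⟶ X'` inside the kernel gives
`(𝟙 - r ≫ s) ≫ p = p`, and `𝟙 - r ≫ s` kills `s`, so it is invertible only if `X' = 0`. -/

section Preadditive

variable {C : Type*} [Category C] [Preadditive C]

/-- In a Krull–Schmidt category this is exactly the radical of the category. -/
def InRadical {X Y : C} (f : X ⟶ Y) : Prop :=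
  ∀ L : C, IsLocalRing (End L) → ∀ (a : L ⟶ X) (b : Y ⟶ L), ¬ IsIso (a ≫ f ≫ b)

namespace InRadical

variable {W X Y Z : C} {f g : X ⟶ Y}

lemma precomp (u : W ⟶ X) (hf : InRadical f) : InRadical (u ≫ f) := fun L hL a b => by
  simpa only [Category.assoc] using hf L hL (a ≫ u) b

lemma postcomp (hf : InRadical f) (v : Y ⟶ Z) : InRadical (f ≫ v) := fun L hL a b => by
  simpa only [Category.assoc] using hf L hL a (v ≫ b)

lemma add (hf : InRadical f) (hg : InRadical g) : InRadical (f + g) := fun L hL a b hab =>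
  @IsLocalRing.nonunits_add (End L) _ hL (a ≫ f ≫ b) (a ≫ g ≫ b)
    (fun hu => hf L hL a b ((isUnit_iff_isIso _).1 hu))
    (fun hu => hg L hL a b ((isUnit_iff_isIso _).1 hu))
    ((isUnit_iff_isIso _).2 <| by
      simpa only [Preadditive.add_comp, Preadditive.comp_add] using hab)

lemma isIso_id_sub {L : C} [IsLocalRing (End L)] {h : L ⟶ L} (hh : InRadical h) :
    IsIso (𝟙 L - h) := by
  let h' : End L := h
  have hh' : ¬ IsUnit h' := fun hu =>
    hh L inferInstance (𝟙 L) (𝟙 L) (by simpa using (isUnit_iff_isIso h).1 hu)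
  exact (isUnit_iff_isIso (1 - h')).1 <|
    (IsLocalRing.isUnit_or_isUnit_of_add_one (add_sub_cancel h' 1)).resolve_left hh'

end InRadical

lemma isIso_id_sub_of_inRadical_of_iso {E F : C} (e : E ≅ F)
    (hF : ∀ h : F ⟶ F, InRadical h → IsIso (𝟙 F - h)) {h : E ⟶ E} (hh : InRadical h) :
    IsIso (𝟙 E - h) := by
  have : IsIso (𝟙 F - e.inv ≫ h ≫ e.hom) :=
    hF _ (by simpa only [Category.assoc] using (hh.precomp e.inv).postcomp e.hom)
  have hconj : 𝟙 E - h = e.hom ≫ (𝟙 F - e.inv ≫ h ≫ e.hom) ≫ e.inv := by simp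
  rw [hconj]
  infer_instance

variable [HasBinaryBiproducts C]

lemma Biprod.isIso_ofComponents {X₁ X₂ Y₁ Y₂ : C} (f₁₁ : X₁ ⟶ Y₁) (f₁₂ : X₁ ⟶ Y₂)
    (f₂₁ : X₂ ⟶ Y₁) (f₂₂ : X₂ ⟶ Y₂) [IsIso f₁₁] [IsIso (f₂₂ - f₂₁ ≫ inv f₁₁ ≫ f₁₂)] :
    IsIso (Biprod.ofComponents f₁₁ f₁₂ f₂₁ f₂₂) := by
  let G := Biprod.gaussian' f₁₁ f₁₂ f₂₁ f₂₂
  have w : G.1.hom ≫ Biprod.ofComponents f₁₁ f₁₂ f₂₁ f₂₂ ≫ G.2.1.hom =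
      biprod.map f₁₁ (f₂₂ - f₂₁ ≫ inv f₁₁ ≫ f₁₂) := G.2.2.2
  have : IsIso (G.1.hom ≫ Biprod.ofComponents f₁₁ f₁₂ f₂₁ f₂₂ ≫ G.2.1.hom) := by
    rw [w]; exact (biprod.mapIso (asIso f₁₁) (asIso _)).isIso_hom
  have : IsIso (Biprod.ofComponents f₁₁ f₁₂ f₂₁ f₂₂ ≫ G.2.1.hom) :=
    IsIso.of_isIso_comp_left G.1.hom _
  exact IsIso.of_isIso_comp_right _ G.2.1.hom

lemma isIso_id_sub_of_inRadical_biprod {L E : C} [IsLocalRing (End L)]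
    (hE : ∀ h : E ⟶ E, InRadical h → IsIso (𝟙 E - h)) {h : L ⊞ E ⟶ L ⊞ E} (hh : InRadical h) :
    IsIso (𝟙 (L ⊞ E) - h) := by
  set h₁₁ := biprod.inl ≫ h ≫ biprod.fst
  set h₁₂ := biprod.inl ≫ h ≫ biprod.snd
  set h₂₁ := biprod.inr ≫ h ≫ biprod.fst
  set h₂₂ := biprod.inr ≫ h ≫ biprod.snd
  have hrad : ∀ {X Y : C} (a : X ⟶ L ⊞ E) (b : L ⊞ E ⟶ Y), InRadical (a ≫ h ≫ b) :=
    fun a b => by simpa only [Category.assoc] using (hh.precomp a).postcomp b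
  have : IsIso (𝟙 L - h₁₁) := (hrad _ _).isIso_id_sub
  have hschur : IsIso ((𝟙 E - h₂₂) - (-h₂₁) ≫ inv (𝟙 L - h₁₁) ≫ (-h₁₂)) := by
    have hrad' : InRadical (h₂₂ + h₂₁ ≫ inv (𝟙 L - h₁₁) ≫ h₁₂) := (hrad _ _).add <| by
      simpa only [h₂₁, h₁₂, Category.assoc] using
        hrad biprod.inr (biprod.fst ≫ inv (𝟙 L - h₁₁) ≫ biprod.inl ≫ h ≫ biprod.snd)
    simpa only [Preadditive.neg_comp, Preadditive.comp_neg, neg_neg, sub_sub] using hE _ hrad'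
  have hcomp : 𝟙 (L ⊞ E) - h = Biprod.ofComponents (𝟙 L - h₁₁) (-h₁₂) (-h₂₁) (𝟙 E - h₂₂) := by
    ext <;> simp [h₁₁, h₁₂, h₂₁, h₂₂]
  rw [hcomp]
  exact Biprod.isIso_ofComponents _ _ _ _

end Preadditive

section FiniteBiproducts

variable {C : Type*} [Category C] [Preadditive C] [HasFiniteBiproducts C]

lemma isZero_biproduct_of_fin_zero (f : Fin 0 → C) : IsZero (⨁ f) := by
  rw [IsZero.iff_id_eq_zero, ← biproduct.total]
  simp

variable [HasBinaryBiproducts C]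

noncomputable def biproductFinSuccIso {n : ℕ} (f : Fin (n + 1) → C) :
    (⨁ f) ≅ f 0 ⊞ ⨁ fun j : Fin n => f j.succ where
  hom := biprod.lift (biproduct.π f 0) (biproduct.lift fun j => biproduct.π f j.succ)
  inv := biprod.desc (biproduct.ι f 0) (biproduct.desc fun j => biproduct.ι f j.succ)
  hom_inv_id := by
    rw [biprod.lift_desc, biproduct.lift_desc, ← biproduct.total, Fin.sum_univ_succ]
  inv_hom_id := by
    ext <;> simp [biproduct.ι_π, Fin.succ_ne_zero, (Fin.succ_ne_zero _).symm, Fin.succ_inj]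

lemma isIso_id_sub_of_inRadical_biproduct {n : ℕ} (f : Fin n → C)
    (hf : ∀ j, IsLocalRing (End (f j))) {h : (⨁ f) ⟶ ⨁ f} (hh : InRadical h) :
    IsIso (𝟙 (⨁ f) - h) := by
  induction n with
  | zero => exact (isZero_biproduct_of_fin_zero f).isIso (isZero_biproduct_of_fin_zero f) _
  | succ n ih =>
    have := hf 0
    exact isIso_id_sub_of_inRadical_of_iso (biproductFinSuccIso f) (fun _ hh' =>
      isIso_id_sub_of_inRadical_biprod (fun _ hh'' => ih _ (fun j => hf j.succ) hh'') hh') hh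

end FiniteBiproducts

lemma IsShortExactSeq.exists_lift {X E Y L : A} {i : X ⟶ E} {p : E ⟶ Y}
    (h : IsShortExactSeq i p) {s : L ⟶ E} (hs : s ≫ p = 0) : ∃ t : L ⟶ X, t ≫ i = s := by
  obtain ⟨_, hse⟩ := h
  have := hse.mono_f
  exact ⟨hse.exact.lift s hs, hse.exact.lift_f s hs⟩

lemma biproduct_mem {𝒳 : Set A}
    (hsum : ∀ {X Y : A}, X ∈ 𝒳 → Y ∈ 𝒳 → (X ⊞ Y) ∈ 𝒳)
    (hsummand : ∀ {X Y : A} (s : X ⟶ Y) (r : Y ⟶ X), s ≫ r = 𝟙 X → Y ∈ 𝒳 → X ∈ 𝒳)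
    {n : ℕ} (g : Fin (n + 1) → A) (hg : ∀ j, g j ∈ 𝒳) : (⨁ g) ∈ 𝒳 := by
  induction n with
  | zero =>
    refine hsummand (biproduct.π g 0) (biproduct.ι g 0) ?_ (hg 0)
    rw [← biproduct.total, Fin.sum_univ_one]
  | succ n ih =>
    exact hsummand (biproductFinSuccIso g).hom (biproductFinSuccIso g).inv
      (biproductFinSuccIso g).hom_inv_id (hsum (hg 0) (ih _ fun j => hg j.succ))

lemma InAdd.mem {𝒳 : Set A}
    (hsum : ∀ {X Y : A}, X ∈ 𝒳 → Y ∈ 𝒳 → (X ⊞ Y) ∈ 𝒳)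
    (hsummand : ∀ {X Y : A} (s : X ⟶ Y) (r : Y ⟶ X), s ≫ r = 𝟙 X → Y ∈ 𝒳 → X ∈ 𝒳)
    {M : A} (hM : InAdd 𝒳 M) (hM₀ : ¬ IsZero M) : M ∈ 𝒳 := by
  obtain ⟨n, g, s, r, hg, hsr⟩ := hM
  cases n with
  | zero =>
    refine absurd ((IsZero.iff_id_eq_zero M).2 ?_) hM₀
    rw [← hsr, (isZero_biproduct_of_fin_zero g).eq_of_tgt s 0, zero_comp]
  | succ n => exact hsummand s r hsr (biproduct_mem hsum hsummand g hg)

lemma InAdd.of_retract {𝒳 : Set A} {M N : A} (s : M ⟶ N) (r : N ⟶ M) (hsr : s ≫ r = 𝟙 M)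
    (hN : InAdd 𝒳 N) : InAdd 𝒳 M := by
  obtain ⟨n, g, s', r', hg, hsr'⟩ := hN
  exact ⟨n, g, s ≫ s', r' ≫ r, hg, by simp [reassoc_of% hsr', hsr]⟩

lemma RightMinimal.isZero_of_retract {X' E Y : A} {p : E ⟶ Y} (hp : RightMinimal p)
    {s : X' ⟶ E} {r : E ⟶ X'} (hsr : s ≫ r = 𝟙 X') (hsp : s ≫ p = 0) : IsZero X' := by
  have : IsIso (𝟙 E - r ≫ s) := hp _ (by simp [hsp])
  have hs : s = 0 := (cancel_mono (𝟙 E - r ≫ s)).1 (by simp [reassoc_of% hsr])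
  exact (IsZero.iff_id_eq_zero X').2 (by rw [← hsr, hs, zero_comp])

lemma KrullSchmidt.rightMinimal_of_no_local_summand_in_kernel (hKS : KrullSchmidt A)
    {E Y : A} {p : E ⟶ Y}
    (hp : ∀ L : A, IsLocalRing (End L) → ∀ (s : L ⟶ E) (r : E ⟶ L), s ≫ r = 𝟙 L → s ≫ p ≠ 0) :
    RightMinimal p := by
  intro g hg
  obtain ⟨n, f, hf, ⟨e⟩⟩ := hKS E
  by_contra hg_iso
  have hrad : ¬ InRadical (𝟙 E - g) := fun hh => hg_iso <| by
    simpa using isIso_id_sub_of_inRadical_of_iso e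
      (fun _ hh' => isIso_id_sub_of_inRadical_biproduct f hf hh') hh
  simp only [InRadical, not_forall, not_not] at hrad
  obtain ⟨L, hL, a, b, hab⟩ := hrad
  exact hp L hL (a ≫ (𝟙 E - g)) (b ≫ inv (a ≫ (𝟙 E - g) ≫ b))
    (by simpa only [Category.assoc] using IsIso.hom_inv_id (a ≫ (𝟙 E - g) ≫ b)) (by simp [hg])

/-- In a Krull–Schmidt abelian category, a universal extension `0 → X → E → Y → 0` to an
additively closed class `𝒳` is minimal (i.e. `E → Y` is right minimal) if and only if `E`
has no nonzero direct summand belonging to `𝒳` and contained in the kernel of `E → Y`,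
i.e. the sequence has no direct summand of the form `0 → X' → X' → 0 → 0` with `X' ∈ 𝒳`. -/
theorem stmt4 (hKS : KrullSchmidt A) {𝒳 : Set A}
    (hsum : ∀ {X Y : A}, X ∈ 𝒳 → Y ∈ 𝒳 → (X ⊞ Y) ∈ 𝒳)
    (hsummand : ∀ {X Y : A} (s : X ⟶ Y) (r : Y ⟶ X), s ≫ r = 𝟙 X → Y ∈ 𝒳 → X ∈ 𝒳)
    {X E Y : A} {i : X ⟶ E} {p : E ⟶ Y} (h : IsUniversalExtension 𝒳 i p) :
    RightMinimal p ↔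
      ¬ ∃ X' : A, X' ∈ 𝒳 ∧ ¬ IsZero X' ∧
        ∃ (s : X' ⟶ E) (r : E ⟶ X'), s ≫ r = 𝟙 X' ∧ s ≫ p = 0 := by
  constructor
  · rintro hp ⟨X', -, hX', s, r, hsr, hsp⟩
    exact hX' (hp.isZero_of_retract hsr hsp)
  · intro hno
    refine hKS.rightMinimal_of_no_local_summand_in_kernel fun L hL s r hsr hsp => ?_
    have hL₀ : ¬ IsZero L := fun hz => one_ne_zero (α := End L) ((IsZero.iff_id_eq_zero L).1 hz)
    obtain ⟨t, ht⟩ := h.2.1.exists_lift hsp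
    have hLX : InAdd 𝒳 L := h.1.of_retract t (i ≫ r) (by rw [reassoc_of% ht, hsr])
    exact hno ⟨L, hLX.mem hsum hsummand hL₀, hL₀, s, r, hsr, hsp⟩
end

section
/- Let X be a full, additively closed, extension-closed subcategory of an abelian category A, and 0 → X → E →^g Y → 0 a minimal universal extension of Y to X. Then g : E → Y is a right ^{⊥_E}X-approximation of Y: every morphism Z → Y with Ext¹(Z, X') = 0 for all X' ∈ X factors through g. -/
open CategoryTheory Limits ZeroObject

attribute [local instance] CategoryTheory.Limits.HasFiniteBiproducts.of_hasFiniteProducts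

universe w v u

variable {A : Type u} [Category.{v} A] [Abelian A]

/-! Pulling `0 → X → E → Y → 0` back along `f : Z ⟶ Y` gives a short exact sequence
`0 → X → P → Z → 0`. Since `X ∈ add 𝒳` and `Ext¹(Z, −)` vanishes on `𝒳`, hence on `add 𝒳`, this
sequence splits, and a section `Z ⟶ P` followed by `P ⟶ E` lifts `f` through `g`. -/

lemma isShortExactSeq_pushout {W U Z M : A} {i : W ⟶ U} {p : U ⟶ Z}
    (h : IsShortExactSeq i p) (s : W ⟶ M) :
    IsShortExactSeq (pushout.inl s i) (pushout.desc 0 p (by rw [comp_zero, h.1])) := by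
  obtain ⟨w, hse⟩ := h
  have := hse.mono_f
  have := hse.epi_g
  have hinr : pushout.inr s i ≫ pushout.desc 0 p (by rw [comp_zero, w]) = p :=
    pushout.inr_desc _ _ _
  refine ⟨pushout.inl_desc _ _ _,
    { exact := ?_, mono_f := inferInstanceAs (Mono _), epi_g := epi_of_epi_fac hinr }⟩
  refine ShortComplex.exact_of_g_is_cokernel _ <| CokernelCofork.IsColimit.ofπ _ _
    (fun t ht => hse.exact.desc (pushout.inr s i ≫ t)
      (by rw [← Category.assoc, ← pushout.condition, Category.assoc, ht, comp_zero]))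
    (fun t ht => pushout.hom_ext ?_ ?_) (fun t _ m hm => ?_)
  · dsimp at ht ⊢
    rw [pushout.inl_desc_assoc, zero_comp, ht]
  · dsimp
    rw [← Category.assoc, hinr, hse.exact.g_desc]
  · rw [← cancel_epi p, hse.exact.g_desc, ← hm, ← Category.assoc, hinr]

lemma isShortExactSeq_pullback {X E Y Z : A} {i : X ⟶ E} {g : E ⟶ Y}
    (h : IsShortExactSeq i g) (f : Z ⟶ Y) :
    IsShortExactSeq (pullback.lift i 0 (by rw [zero_comp, h.1])) (pullback.snd g f) := by
  obtain ⟨w, hse⟩ := h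
  have := hse.mono_f
  have := hse.epi_g
  have hfst : pullback.lift i 0 (by rw [zero_comp, w]) ≫ pullback.fst g f = i :=
    pullback.lift_fst _ _ _
  refine ⟨pullback.lift_snd _ _ _,
    { exact := ?_, mono_f := mono_of_mono_fac hfst, epi_g := inferInstanceAs (Epi _) }⟩
  refine ShortComplex.exact_of_f_is_kernel _ <| KernelFork.IsLimit.ofι _ _
    (fun t ht => hse.exact.lift (t ≫ pullback.fst g f)
      (by rw [Category.assoc, pullback.condition, ← Category.assoc, ht, zero_comp]))
    (fun t ht => pullback.hom_ext ?_ ?_) (fun t _ m hm => ?_)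
  · dsimp
    rw [Category.assoc, hfst, hse.exact.lift_f]
  · dsimp at ht ⊢
    rw [Category.assoc, pullback.lift_snd, comp_zero, ht]
  · rw [← cancel_mono i, hse.exact.lift_f, ← hm, Category.assoc, hfst]

lemma Ext1Vanishes.exists_extension {Z M : A} (hv : Ext1Vanishes Z M) {W U : A} {i : W ⟶ U}
    {p : U ⟶ Z} (h : IsShortExactSeq i p) (s : W ⟶ M) : ∃ t : U ⟶ M, i ≫ t = s := by
  obtain ⟨r, hr⟩ := hv _ _ (isShortExactSeq_pushout h s)
  exact ⟨pushout.inr s i ≫ r, by rw [← pushout.condition_assoc, hr, Category.comp_id]⟩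

lemma ext1Vanishes_biproduct {Z : A} {J : Type} [Finite J] (g : J → A)
    (hv : ∀ j, Ext1Vanishes Z (g j)) : Ext1Vanishes Z (⨁ g) := by
  intro U i p h
  choose t ht using fun j => (hv j).exists_extension h (biproduct.π g j)
  exact ⟨biproduct.lift t, by ext j; simp [ht]⟩

lemma Ext1Vanishes.of_retract {Z X M : A} (hv : Ext1Vanishes Z M) (hX : Retract X M) :
    Ext1Vanishes Z X := by
  intro U i p h
  obtain ⟨t, ht⟩ := hv.exists_extension h hX.i
  exact ⟨t ≫ hX.r, by simp [reassoc_of% ht]⟩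

lemma InAdd.ext1Vanishes {𝒳 : Set A} {Z M : A} (hM : InAdd 𝒳 M)
    (hv : ∀ X' ∈ 𝒳, Ext1Vanishes Z X') : Ext1Vanishes Z M := by
  obtain ⟨n, g, s, r, hg, hsr⟩ := hM
  exact (ext1Vanishes_biproduct g fun j => hv _ (hg j)).of_retract ⟨s, r, hsr⟩

lemma IsShortExactSeq.exists_lift_s6 {X E Y Z : A} {i : X ⟶ E} {g : E ⟶ Y}
    (h : IsShortExactSeq i g) (hv : Ext1Vanishes Z X) (f : Z ⟶ Y) :
    ∃ k : Z ⟶ E, k ≫ g = f := by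
  obtain ⟨w, hse⟩ := isShortExactSeq_pullback h f
  obtain ⟨r, hr⟩ := hv _ _ ⟨w, hse⟩
  let σ := ShortComplex.Splitting.ofExactOfRetraction _ hse.exact r hr hse.epi_g
  refine ⟨σ.s ≫ pullback.fst g f, ?_⟩
  rw [Category.assoc, pullback.condition, σ.s_g_assoc]

theorem stmt6_general {𝒳 : Set A}
    {X E Y : A} {i : X ⟶ E} {g : E ⟶ Y}
    (hu : IsUniversalExtension 𝒳 i g) :
    ∀ (Z : A), (∀ X' ∈ 𝒳, Ext1Vanishes Z X') → ∀ f : Z ⟶ Y, ∃ h : Z ⟶ E, h ≫ g = f := by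
  obtain ⟨hX, hses, -⟩ := hu
  intro Z hZ f
  exact hses.exists_lift_s6 (hX.ext1Vanishes hZ) f

/-- Wakamatsu-type lemma, second part: the epimorphism `g : E ⟶ Y` of a minimal
universal extension of `Y` to `𝒳` is a right `^{⊥_E}𝒳`-approximation of `Y`. -/
theorem stmt6 {𝒳 : Set A}
    (hsum : ∀ {X Y : A}, X ∈ 𝒳 → Y ∈ 𝒳 → (X ⊞ Y) ∈ 𝒳)
    (hsummand : ∀ {X Y : A} (s : X ⟶ Y) (r : Y ⟶ X), s ≫ r = 𝟙 X → Y ∈ 𝒳 → X ∈ 𝒳)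
    (hext : ∀ {X E Y : A} (i : X ⟶ E) (p : E ⟶ Y),
      IsShortExactSeq i p → X ∈ 𝒳 → Y ∈ 𝒳 → E ∈ 𝒳)
    {X E Y : A} {i : X ⟶ E} {g : E ⟶ Y}
    (hu : IsUniversalExtension 𝒳 i g) (hm : RightMinimal g) :
    ∀ (Z : A), (∀ X' ∈ 𝒳, Ext1Vanishes Z X') → ∀ f : Z ⟶ Y, ∃ h : Z ⟶ E, h ≫ g = f :=
  stmt6_general hu
end

section
/- Let (T, F) be a torsion pair in a Krull–Schmidt abelian category A, and let F → F' be a morphism between objects of F each admitting a (fixed) minimal universal extension to T, with middle terms E and E'. Then there exists a morphism E → E' making the diagram of the two universal extensions commute, and its class modulo morphisms factoring through T is uniquely determined. This yields a functor c : E → ^{⊥_E}T/[T], where E is the subcategory of torsion-free objects admitting a universal extension to T. -/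
open CategoryTheory Limits ZeroObject

attribute [local instance] CategoryTheory.Limits.HasFiniteBiproducts.of_hasFiniteProducts

universe w v u

variable {A : Type u} [Category.{v} A] [Abelian A]

/-!
The extension `0 → T' → E' → F' → 0` pulled back along `f` is an extension of `F` by
`T' ∈ 𝒯`, so universality of `0 → T → E → F → 0` maps it into the pullback, and composing
with the projection to `E'` gives the required morphism. Two lifts of `p ≫ f` differ by a
morphism killed by `p'`, which therefore factors through `i' : T' ⟶ E'`.
-/

namespace IsShortExactSeq

variable {X E Y : A} {i : X ⟶ E} {p : E ⟶ Y}

theorem pullback_snd (h : IsShortExactSeq i p) {Y' : A} (f : Y' ⟶ Y) {k : X ⟶ pullback p f}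
    (hk₁ : k ≫ pullback.fst p f = i) (hk₂ : k ≫ pullback.snd p f = 0) :
    IsShortExactSeq k (pullback.snd p f) := by
  obtain ⟨_, hse⟩ := h
  have : Mono i := hse.mono_f
  have : Epi p := hse.epi_g
  have : Mono k := mono_of_mono_fac hk₁
  refine ⟨hk₂, { exact := ?_ }⟩
  rw [ShortComplex.exact_iff_exact_up_to_refinements]
  intro B x₂ (hx₂ : x₂ ≫ pullback.snd p f = 0)
  obtain ⟨B', π, hπ, x₁, fac⟩ := hse.exact.exact_up_to_refinements (x₂ ≫ pullback.fst p f)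
    (by simp only [Category.assoc, pullback.condition, reassoc_of% hx₂, zero_comp])
  refine ⟨B', π, hπ, x₁, pullback.hom_ext ?_ ?_⟩
  · simpa [hk₁] using fac
  · simp [hk₂, hx₂]

theorem exists_sub_eq_comp (h : IsShortExactSeq i p) {W : A} {g₁ g₂ : W ⟶ E}
    (hg : g₁ ≫ p = g₂ ≫ p) : ∃ a : W ⟶ X, g₁ - g₂ = a ≫ i := by
  obtain ⟨_, hse⟩ := h
  have : Mono i := hse.mono_f
  exact ⟨hse.exact.lift (g₁ - g₂) (by rw [Preadditive.sub_comp, hg, sub_self]),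
    (hse.exact.lift_f _ _).symm⟩

end IsShortExactSeq

theorem IsUniversalExtension.exists_comp_eq {𝒳 : Set A} {X E Y : A} {i : X ⟶ E} {p : E ⟶ Y}
    (hu : IsUniversalExtension 𝒳 i p) {X' E' Y' : A} {i' : X' ⟶ E'} {p' : E' ⟶ Y'}
    (hX' : X' ∈ 𝒳) (h' : IsShortExactSeq i' p') (f : Y ⟶ Y') :
    ∃ (φ : X ⟶ X') (ψ : E ⟶ E'), i ≫ ψ = φ ≫ i' ∧ ψ ≫ p' = p ≫ f := by
  obtain ⟨φ, ψ, hi, hp⟩ := hu.2.2 _ _ hX'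
    (h'.pullback_snd f (pullback.lift_fst i' 0 (by simp [h'.1])) (pullback.lift_snd _ _ _))
  refine ⟨φ, ψ ≫ pullback.fst p' f, ?_, ?_⟩
  · rw [reassoc_of% hi, pullback.lift_fst]
  · rw [Category.assoc, pullback.condition, reassoc_of% hp]

theorem stmt9_general (P : TorsionPair A)
    {F F' T T' E E' : A} (f : F ⟶ F')
    {i : T ⟶ E} {p : E ⟶ F} {i' : T' ⟶ E'} {p' : E' ⟶ F'}
    (hT' : T' ∈ P.tors)
    (hu : IsUniversalExtension P.tors i p)
    (hu' : IsUniversalExtension P.tors i' p') :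
    (∃ (φ : T ⟶ T') (ψ : E ⟶ E'), i ≫ ψ = φ ≫ i' ∧ ψ ≫ p' = p ≫ f) ∧
    ∀ ψ₁ ψ₂ : E ⟶ E', ψ₁ ≫ p' = p ≫ f → ψ₂ ≫ p' = p ≫ f →
      ∃ (T₀ : A) (a : E ⟶ T₀) (b : T₀ ⟶ E'), T₀ ∈ P.tors ∧ ψ₁ - ψ₂ = a ≫ b := by
  refine ⟨hu.exists_comp_eq hT' hu'.2.1 f, fun ψ₁ ψ₂ h₁ h₂ => ?_⟩
  obtain ⟨a, ha⟩ := hu'.2.1.exists_sub_eq_comp (h₁.trans h₂.symm)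
  exact ⟨T', a, i', hT', ha⟩

/-- Given a morphism `f : F ⟶ F'` between torsion-free objects with fixed minimal
universal extensions to `𝒯`, there is a compatible morphism between the middle terms,
unique up to morphisms factoring through `𝒯`; this is the assignment underlying the
functor `c : ℰ ⥤ ^{⊥_E}𝒯/[𝒯]`. -/
theorem stmt9 (hKS : KrullSchmidt A) (P : TorsionPair A)
    {F F' T T' E E' : A} (f : F ⟶ F')
    (hF : F ∈ P.free) (hF' : F' ∈ P.free)
    {i : T ⟶ E} {p : E ⟶ F} {i' : T' ⟶ E'} {p' : E' ⟶ F'}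
    (hT : T ∈ P.tors) (hT' : T' ∈ P.tors)
    (hu : IsUniversalExtension P.tors i p) (hm : RightMinimal p)
    (hu' : IsUniversalExtension P.tors i' p') (hm' : RightMinimal p') :
    (∃ (φ : T ⟶ T') (ψ : E ⟶ E'), i ≫ ψ = φ ≫ i' ∧ ψ ≫ p' = p ≫ f) ∧
    ∀ ψ₁ ψ₂ : E ⟶ E', ψ₁ ≫ p' = p ≫ f → ψ₂ ≫ p' = p ≫ f →
      ∃ (T₀ : A) (a : E ⟶ T₀) (b : T₀ ⟶ E'), T₀ ∈ P.tors ∧ ψ₁ - ψ₂ = a ≫ b :=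
  stmt9_general P f hT' hu hu'
end
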